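/- Let V ∈ ℂ^{n×n} be invertible with each column of unit Euclidean norm, let E ∈ ℂ^{n×n}, and let F be an entrywise-nonnegative real n×n matrix with |E_{ij}| ≤ F_{ij} for all i, j. Then for every index i, the i-th absolute row sum of V⁻¹·E·V satisfies Σ_{j=1}^n |(V⁻¹ E V)_{ij}| ≤ n · ‖F‖₂ · ‖w_i‖₂, where ‖F‖₂ is the spectral norm of F and ‖w_i‖₂ is the Euclidean norm of the i-th row of V⁻¹. -/

import Mathlib

open Set Metric

open scoped Classical in
/-- Number of zeros of `f` in `U`, counted with multiplicity (order of vanishing). -/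
noncomputable def zeroCount (f : ℂ → ℂ) (U : Set ℂ) : ℕ :=
  ∑ᶠ z ∈ U, if h : AnalyticAt ℂ f z then (analyticOrderAt f z).toNat else 0

/-- Number of eigenvalues of the matrix-valued function `T` in `U`, counted with
multiplicity (order of vanishing of `det ∘ T`). -/
noncomputable def evCount {n : ℕ} (T : ℂ → Matrix (Fin n) (Fin n) ℂ) (U : Set ℂ) : ℕ :=
  zeroCount (fun z => (T z).det) U

/-- Entrywise analyticity of a matrix-valued function on a set. -/
def MatAnalyticOn {n : ℕ} (T : ℂ → Matrix (Fin n) (Fin n) ℂ) (Ω : Set ℂ) : Prop :=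
  ∀ i j, ∀ z ∈ Ω, AnalyticAt ℂ (fun w => T w i j) z

/-- Operator norm on `ℂ^{n×n}` induced by the Euclidean norm (spectral norm). -/
noncomputable def l2norm {n : ℕ} (M : Matrix (Fin n) (Fin n) ℂ) : ℝ :=
  ‖Matrix.toEuclideanCLM (𝕜 := ℂ) M‖

/-- Spectral norm of a real matrix. -/
noncomputable def l2normR {n : ℕ} (M : Matrix (Fin n) (Fin n) ℝ) : ℝ :=
  ‖Matrix.toEuclideanCLM (𝕜 := ℝ) M‖

/-- Euclidean norm of a vector in `ℂⁿ`. -/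
noncomputable def e2norm {n : ℕ} (v : Fin n → ℂ) : ℝ :=
  Real.sqrt (∑ k, ‖v k‖ ^ 2)

/-- The `ε`-pseudospectrum of an analytic matrix-valued function on `Ω`. -/
noncomputable def pspec {n : ℕ} (T : ℂ → Matrix (Fin n) (Fin n) ℂ) (Ω : Set ℂ) (ε : ℝ) :
    Set ℂ :=
  {z ∈ Ω | ¬ IsUnit (T z) ∨ ε⁻¹ < l2norm (T z)⁻¹}

/-! With `w = (‖V⁻¹ i k‖)ₖ` and `b = |V| e`, the triangle inequality bounds the row sum by
`w ⬝ᵥ F b ≤ ‖w‖₂ ‖F‖₂ ‖b‖₂` (Cauchy–Schwarz), and `‖b‖₂ ≤ n` because `b` is the sum of the `n`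
entrywise absolute values of the unit columns of `V`. -/

open Finset Matrix

section RowSums

variable {R : Type*} [SeminormedRing R] {l m n o : Type*} [Fintype m]

theorem Matrix.norm_mul_apply_le (A : Matrix l m R) (B : Matrix m n R) (i : l) (j : n) :
    ‖(A * B) i j‖ ≤ ∑ k, ‖A i k‖ * ‖B k j‖ :=
  (norm_sum_le _ _).trans (sum_le_sum fun _ _ => norm_mul_le _ _)

theorem Matrix.sum_norm_mul_mul_apply_le [Fintype n] [Fintype o] (A : Matrix l m R)
    (E : Matrix m n R) (B : Matrix n o R) (F : Matrix m n ℝ) (hEF : ∀ k l, ‖E k l‖ ≤ F k l)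
    (i : l) :
    ∑ j, ‖(A * E * B) i j‖ ≤ (fun k => ‖A i k‖) ⬝ᵥ (F *ᵥ fun l => ∑ j, ‖B l j‖) := by
  have hAE : ∀ l, ‖(A * E) i l‖ ≤ ∑ k, ‖A i k‖ * F k l := fun l =>
    (norm_mul_apply_le A E i l).trans
      (sum_le_sum fun k _ => mul_le_mul_of_nonneg_left (hEF k l) (norm_nonneg _))
  calc ∑ j, ‖(A * E * B) i j‖
      ≤ ∑ j, ∑ l, (∑ k, ‖A i k‖ * F k l) * ‖B l j‖ :=
        sum_le_sum fun j _ => (norm_mul_apply_le _ B i j).trans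
          (sum_le_sum fun l _ => mul_le_mul_of_nonneg_right (hAE l) (norm_nonneg _))
    _ = ((fun k => ‖A i k‖) ᵥ* F) ⬝ᵥ (fun l => ∑ j, ‖B l j‖) := by
        simp only [dotProduct, vecMul, mul_sum]
        exact sum_comm
    _ = (fun k => ‖A i k‖) ⬝ᵥ (F *ᵥ fun l => ∑ j, ‖B l j‖) := (dotProduct_mulVec _ _ _).symm

end RowSums

theorem Matrix.norm_toLp_sum_norm_le {𝕜 : Type*} [NormedAddCommGroup 𝕜] {m n : Type*}
    [Fintype m] [Fintype n] (V : Matrix m n 𝕜) :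
    ‖WithLp.toLp 2 (fun l => ∑ j, ‖V l j‖)‖ ≤ ∑ j, ‖WithLp.toLp 2 (fun l => ‖V l j‖)‖ := by
  have hsum : WithLp.toLp 2 (fun l => ∑ j, ‖V l j‖) = ∑ j, WithLp.toLp 2 (fun l => ‖V l j‖) := by
    ext l
    simp
  exact hsum ▸ norm_sum_le _ _

theorem e2norm_eq_norm_toLp {n : ℕ} (v : Fin n → ℂ) :
    e2norm v = ‖WithLp.toLp 2 (fun k => ‖v k‖)‖ := by
  simp [e2norm, EuclideanSpace.norm_eq]

theorem norm_toLp_mulVec_le_l2normR {n : ℕ} (F : Matrix (Fin n) (Fin n) ℝ) (x : Fin n → ℝ) :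
    ‖WithLp.toLp 2 (F *ᵥ x)‖ ≤ l2normR F * ‖WithLp.toLp 2 x‖ := by
  rw [← toEuclideanCLM_toLp]
  exact (toEuclideanCLM (𝕜 := ℝ) F).le_opNorm _

theorem dotProduct_le_norm_toLp_mul_norm_toLp {n : Type*} [Fintype n] (x y : n → ℝ) :
    x ⬝ᵥ y ≤ ‖WithLp.toLp 2 x‖ * ‖WithLp.toLp 2 y‖ := by
  rw [dotProduct_comm]
  exact real_inner_le_norm (WithLp.toLp 2 x) (WithLp.toLp 2 y)

theorem stmt_16_general {n : ℕ} (V E : Matrix (Fin n) (Fin n) ℂ)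
    (hcols : ∀ i, e2norm (fun k => V k i) = 1)
    (F : Matrix (Fin n) (Fin n) ℝ)
    (hEF : ∀ i j, ‖E i j‖ ≤ F i j) (i : Fin n) :
    ∑ j, ‖(V⁻¹ * E * V) i j‖ ≤ n * l2normR F * e2norm (fun k => V⁻¹ i k) := by
  set w : Fin n → ℝ := fun k => ‖V⁻¹ i k‖
  set b : Fin n → ℝ := fun l => ∑ j, ‖V l j‖
  have hb : ‖WithLp.toLp 2 b‖ ≤ n := by
    refine (norm_toLp_sum_norm_le V).trans_eq ?_
    simp [← e2norm_eq_norm_toLp, hcols]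
  calc ∑ j, ‖(V⁻¹ * E * V) i j‖
      ≤ w ⬝ᵥ (F *ᵥ b) := sum_norm_mul_mul_apply_le V⁻¹ E V F hEF i
    _ ≤ ‖WithLp.toLp 2 w‖ * ‖WithLp.toLp 2 (F *ᵥ b)‖ :=
        dotProduct_le_norm_toLp_mul_norm_toLp _ _
    _ ≤ ‖WithLp.toLp 2 w‖ * (l2normR F * n) := by
        gcongr
        exact (norm_toLp_mulVec_le_l2normR F b).trans
          (mul_le_mul_of_nonneg_left hb (norm_nonneg _))
    _ = n * l2normR F * e2norm (fun k => V⁻¹ i k) := by rw [e2norm_eq_norm_toLp]; ring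

/-- the row-sum bound from the Bauer–Fike proof: the `i`-th absolute row sum
of `V⁻¹ E V` is at most `n ‖F‖₂ ‖wᵢ‖₂`, where `wᵢ*` is the `i`-th row of `V⁻¹`. -/
theorem stmt_16 {n : ℕ} (hn : 0 < n) (V E : Matrix (Fin n) (Fin n) ℂ) (hV : IsUnit V)
    (hcols : ∀ i, e2norm (fun k => V k i) = 1)
    (F : Matrix (Fin n) (Fin n) ℝ) (hF : ∀ i j, 0 ≤ F i j)
    (hEF : ∀ i j, ‖E i j‖ ≤ F i j) (i : Fin n) :
    ∑ j, ‖(V⁻¹ * E * V) i j‖ ≤ n * l2normR F * e2norm (fun k => V⁻¹ i k) :=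
  stmt_16_general V E hcols F hEF i
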